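/- Let n ≥ 1, let ρ_xy : ℝⁿ×ℝⁿ → [0,∞) and ρ_xzt : ℝⁿ×ℝⁿ×[0,1] → [0,∞) be integrable, ρ₀ : ℝⁿ → [0,∞) integrable, and Q : ℝⁿ×[0,1] → [0,∞) measurable. Suppose (π¹_xy, π¹_xzt) and (π²_xy, π²_xzt) are two pairs of nonnegative measurable functions, each vanishing a.e. where ρ_xy respectively ρ_xzt vanish, each satisfying the constraints ∫ π_xy(x,y) dy + ∫_0^1 ∫ π_xzt(x,z,t) dz dt = ρ₀(x) for a.e. x and ∫ π_xzt(x,z,t) dx = Q(z,t) for a.e. (z,t), each with D(π_xy‖ρ_xy) + D(π_xzt‖ρ_xzt) < ∞, and both attaining the infimum of D(π_xy‖ρ_xy) + D(π_xzt‖ρ_xzt) over all such constrained pairs. Then π¹_xy = π²_xy a.e. and π¹_xzt = π²_xzt a.e. -/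

import Mathlib

open MeasureTheory

/-- Relative entropy `D(p‖q) = ∫ p log(p/q) dm` between nonnegative densities
(with the convention `0 log(0/0) = 0`, which holds in Lean since `Real.log 0 = 0`
and `0/0 = 0`). -/
noncomputable def dEnt {E : Type*} [MeasurableSpace E] (m : Measure E) (p q : E → ℝ) : ℝ :=
  ∫ x, p x * Real.log (p x / q x) ∂m

/-- Feasibility for Problem 2: a pair of couplings is measurable, nonnegative, vanishes a.e.
where the prior couplings vanish, matches the initial marginal `ρ₀` and the spatio-temporal
killing marginal `Q`, and has finite (i.e. integrable) relative-entropy integrands. -/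
def Feasible (n : ℕ)
    (ρxy : (Fin n → ℝ) × (Fin n → ℝ) → ℝ)
    (ρxzt : (Fin n → ℝ) × (Fin n → ℝ) × ℝ → ℝ)
    (ρ₀ : (Fin n → ℝ) → ℝ) (Q : (Fin n → ℝ) × ℝ → ℝ)
    (mzt : Measure ((Fin n → ℝ) × (Fin n → ℝ) × ℝ)) (mQ : Measure ((Fin n → ℝ) × ℝ))
    (πxy : (Fin n → ℝ) × (Fin n → ℝ) → ℝ)
    (πxzt : (Fin n → ℝ) × (Fin n → ℝ) × ℝ → ℝ) : Prop :=
  Measurable πxy ∧ Measurable πxzt ∧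
  (∀ p, 0 ≤ πxy p) ∧ (∀ p, 0 ≤ πxzt p) ∧
  (∀ᵐ p ∂(volume : Measure ((Fin n → ℝ) × (Fin n → ℝ))), ρxy p = 0 → πxy p = 0) ∧
  (∀ᵐ p ∂mzt, ρxzt p = 0 → πxzt p = 0) ∧
  (∀ᵐ x ∂(volume : Measure (Fin n → ℝ)),
    (∫ y, πxy (x, y)) + ∫ t in Set.Icc (0:ℝ) 1, ∫ z, πxzt (x, z, t) = ρ₀ x) ∧
  (∀ᵐ zt ∂mQ, (∫ x, πxzt (x, zt.1, zt.2)) = Q zt) ∧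
  Integrable (fun p => πxy p * Real.log (πxy p / ρxy p)) volume ∧
  Integrable (fun p => πxzt p * Real.log (πxzt p / ρxzt p)) mzt

/-!
The average of two minimizers is again feasible, because the marginal constraints are linear
(the couplings are integrable since `a log (a / q) ≥ a - q` and the priors are integrable).
Since `a ↦ a log (a / q)` is strictly convex, the objective at the average lies below the
average of the objectives, with a nonnegative Jensen gap pointwise. Minimality forces the
integrated gap to vanish, so the gap vanishes a.e., and strict convexity gives `π¹ = π²` a.e.
-/

open Real Set

section Pointwise

variable {a b q : ℝ}

lemma sub_le_mul_log_div (ha : 0 ≤ a) (hq : 0 ≤ q) (h0 : q = 0 → a = 0) :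
    a - q ≤ a * log (a / q) := by
  rcases ha.eq_or_lt with rfl | ha
  · simpa using hq
  have hq : 0 < q := hq.lt_of_ne fun h => ha.ne' (h0 h.symm)
  calc a - q = a * (1 - (a / q)⁻¹) := by field_simp
    _ ≤ a * log (a / q) := by gcongr; exact one_sub_inv_le_log_of_pos (by positivity)

lemma strictConvexOn_mul_log_div (hq : 0 < q) :
    StrictConvexOn ℝ (Ici 0) fun a => a * log (a / q) := by
  refine (strictConvexOn_mul_log.sub_concaveOn
    (((LinearMap.mul ℝ ℝ).flip (log q)).concaveOn (convex_Ici 0))).congr fun a ha => ?_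
  rcases (mem_Ici.1 ha).eq_or_lt with rfl | ha
  · simp
  · simp [log_div ha.ne' hq.ne', mul_sub, mul_comm]

lemma mul_log_div_midpoint_le (ha : 0 ≤ a) (hb : 0 ≤ b) (hq : 0 ≤ q)
    (ha0 : q = 0 → a = 0) (hb0 : q = 0 → b = 0) :
    (a + b) / 2 * log ((a + b) / 2 / q) ≤ (a * log (a / q) + b * log (b / q)) / 2 := by
  rcases hq.eq_or_lt with rfl | hq
  · simp [ha0 rfl, hb0 rfl]
  have := (strictConvexOn_mul_log_div hq).convexOn.2 ha hb (by norm_num : (0:ℝ) ≤ 1 / 2)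
    (by norm_num : (0:ℝ) ≤ 1 / 2) (by norm_num)
  simp only [smul_eq_mul] at this
  rw [show 1 / 2 * a + 1 / 2 * b = (a + b) / 2 by ring] at this
  linarith

lemma eq_of_mul_log_div_midpoint_ge (ha : 0 ≤ a) (hb : 0 ≤ b) (hq : 0 ≤ q)
    (ha0 : q = 0 → a = 0) (hb0 : q = 0 → b = 0)
    (h : (a * log (a / q) + b * log (b / q)) / 2 ≤ (a + b) / 2 * log ((a + b) / 2 / q)) :
    a = b := by
  rcases hq.eq_or_lt with rfl | hq
  · rw [ha0 rfl, hb0 rfl]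
  by_contra hab
  have := (strictConvexOn_mul_log_div hq).2 ha hb hab (by norm_num : (0:ℝ) < 1 / 2)
    (by norm_num : (0:ℝ) < 1 / 2) (by norm_num)
  simp only [smul_eq_mul] at this
  rw [show 1 / 2 * a + 1 / 2 * b = (a + b) / 2 by ring] at this
  linarith

end Pointwise

lemma integral_midpoint {α : Type*} [MeasurableSpace α] {μ : Measure α} {f g : α → ℝ}
    (hf : Integrable f μ) (hg : Integrable g μ) :
    ∫ x, (f x + g x) / 2 ∂μ = ((∫ x, f x ∂μ) + ∫ x, g x ∂μ) / 2 := by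
  rw [integral_div, integral_add hf hg]

section RelativeEntropy

variable {α : Type*} [MeasurableSpace α] {μ : Measure α} {f f₁ f₂ ρ : α → ℝ}

structure FiniteRelEntropy (μ : Measure α) (f ρ : α → ℝ) : Prop where
  measurable : Measurable f
  nonneg : ∀ p, 0 ≤ f p
  ae_eq_zero_of_eq_zero : ∀ᵐ p ∂μ, ρ p = 0 → f p = 0
  integrable_mul_log : Integrable (fun p => f p * log (f p / ρ p)) μ

namespace FiniteRelEntropy

lemma integrable (h : FiniteRelEntropy μ f ρ) (hρ : ∀ p, 0 ≤ ρ p) (hρi : Integrable ρ μ) :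
    Integrable f μ := by
  refine (hρi.add h.integrable_mul_log.abs).mono' h.measurable.aestronglyMeasurable ?_
  filter_upwards [h.ae_eq_zero_of_eq_zero] with p hp
  rw [norm_of_nonneg (h.nonneg p), Pi.add_apply]
  linarith [sub_le_mul_log_div (h.nonneg p) (hρ p) hp, le_abs_self (f p * log (f p / ρ p))]

lemma midpoint (h₁ : FiniteRelEntropy μ f₁ ρ) (h₂ : FiniteRelEntropy μ f₂ ρ)
    (hρ : ∀ p, 0 ≤ ρ p) (hρi : Integrable ρ μ) :
    FiniteRelEntropy μ (fun p => (f₁ p + f₂ p) / 2) ρ where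
  measurable := (h₁.measurable.add h₂.measurable).div_const 2
  nonneg p := by linarith [h₁.nonneg p, h₂.nonneg p]
  ae_eq_zero_of_eq_zero := by
    filter_upwards [h₁.ae_eq_zero_of_eq_zero, h₂.ae_eq_zero_of_eq_zero] with p hp₁ hp₂ hp
    simp [hp₁ hp, hp₂ hp]
  integrable_mul_log := by
    have hm := ((h₁.measurable.add h₂.measurable).div_const 2).aemeasurable (μ := μ)
    refine integrable_of_le_of_le (g₁ := fun p => -ρ p)
      (hm.mul (measurable_log.comp_aemeasurable (hm.div hρi.aemeasurable))).aestronglyMeasurable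
      ?_ ?_ hρi.neg ((h₁.integrable_mul_log.add h₂.integrable_mul_log).div_const 2)
    · filter_upwards [h₁.ae_eq_zero_of_eq_zero, h₂.ae_eq_zero_of_eq_zero] with p hp₁ hp₂
      have hmid := sub_le_mul_log_div (a := (f₁ p + f₂ p) / 2)
        (by linarith [h₁.nonneg p, h₂.nonneg p]) (hρ p) fun h => by simp [hp₁ h, hp₂ h]
      linarith [h₁.nonneg p, h₂.nonneg p]
    · filter_upwards [h₁.ae_eq_zero_of_eq_zero, h₂.ae_eq_zero_of_eq_zero] with p hp₁ hp₂
      exact mul_log_div_midpoint_le (h₁.nonneg p) (h₂.nonneg p) (hρ p) hp₁ hp₂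

lemma dEnt_midpoint_le (h₁ : FiniteRelEntropy μ f₁ ρ) (h₂ : FiniteRelEntropy μ f₂ ρ)
    (hρ : ∀ p, 0 ≤ ρ p) (hρi : Integrable ρ μ) :
    dEnt μ (fun p => (f₁ p + f₂ p) / 2) ρ ≤ (dEnt μ f₁ ρ + dEnt μ f₂ ρ) / 2 := by
  rw [dEnt, dEnt, dEnt, ← integral_midpoint h₁.integrable_mul_log h₂.integrable_mul_log]
  refine integral_mono_ae (h₁.midpoint h₂ hρ hρi).integrable_mul_log
    ((h₁.integrable_mul_log.add h₂.integrable_mul_log).div_const 2) ?_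
  filter_upwards [h₁.ae_eq_zero_of_eq_zero, h₂.ae_eq_zero_of_eq_zero] with p hp₁ hp₂
  exact mul_log_div_midpoint_le (h₁.nonneg p) (h₂.nonneg p) (hρ p) hp₁ hp₂

lemma ae_eq_of_dEnt_midpoint_ge (h₁ : FiniteRelEntropy μ f₁ ρ) (h₂ : FiniteRelEntropy μ f₂ ρ)
    (hρ : ∀ p, 0 ≤ ρ p) (hρi : Integrable ρ μ)
    (h : (dEnt μ f₁ ρ + dEnt μ f₂ ρ) / 2 ≤ dEnt μ (fun p => (f₁ p + f₂ p) / 2) ρ) :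
    f₁ =ᵐ[μ] f₂ := by
  set gap : α → ℝ := fun p => (f₁ p * log (f₁ p / ρ p) + f₂ p * log (f₂ p / ρ p)) / 2 -
    (f₁ p + f₂ p) / 2 * log ((f₁ p + f₂ p) / 2 / ρ p) with hgap
  have hsum_int :
      Integrable (fun p => (f₁ p * log (f₁ p / ρ p) + f₂ p * log (f₂ p / ρ p)) / 2) μ :=
    (h₁.integrable_mul_log.add h₂.integrable_mul_log).div_const 2
  have hmid_int := (h₁.midpoint h₂ hρ hρi).integrable_mul_log
  have hgap_int : Integrable gap μ := hsum_int.sub hmid_int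
  have hgap_nonneg : 0 ≤ᵐ[μ] gap := by
    filter_upwards [h₁.ae_eq_zero_of_eq_zero, h₂.ae_eq_zero_of_eq_zero] with p hp₁ hp₂
    exact sub_nonneg.2 (mul_log_div_midpoint_le (h₁.nonneg p) (h₂.nonneg p) (hρ p) hp₁ hp₂)
  have hgap_zero : ∫ p, gap p ∂μ = 0 := by
    refine le_antisymm ?_ (integral_nonneg_of_ae hgap_nonneg)
    simp only [hgap]
    rw [integral_sub hsum_int hmid_int,
      integral_midpoint h₁.integrable_mul_log h₂.integrable_mul_log]
    simp only [dEnt] at h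
    linarith
  filter_upwards [(integral_eq_zero_iff_of_nonneg_ae hgap_nonneg hgap_int).1 hgap_zero,
    h₁.ae_eq_zero_of_eq_zero, h₂.ae_eq_zero_of_eq_zero] with p hp hp₁ hp₂
  refine eq_of_mul_log_div_midpoint_ge (h₁.nonneg p) (h₂.nonneg p) (hρ p) hp₁ hp₂ ?_
  simp only [hgap, Pi.zero_apply] at hp
  linarith

end FiniteRelEntropy

end RelativeEntropy

section Fubini

variable {α β : Type*} [MeasurableSpace α] [MeasurableSpace β] {μ : Measure α} {ν : Measure β}
  [SFinite μ] [SFinite ν] {f g : α × β → ℝ}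

lemma MeasureTheory.Measure.prod_restrict_right (t : Set β) :
    μ.prod (ν.restrict t) = (μ.prod ν).restrict (Prod.snd ⁻¹' t) := by
  rw [← univ_prod, ← Measure.prod_restrict, Measure.restrict_univ]

lemma ae_integral_midpoint_right (hf : Integrable f (μ.prod ν)) (hg : Integrable g (μ.prod ν)) :
    ∀ᵐ x ∂μ, ∫ y, (f (x, y) + g (x, y)) / 2 ∂ν =
      ((∫ y, f (x, y) ∂ν) + ∫ y, g (x, y) ∂ν) / 2 := by
  filter_upwards [hf.prod_right_ae, hg.prod_right_ae] with x hfx hgx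
  exact integral_midpoint hfx hgx

lemma ae_integral_midpoint_left (hf : Integrable f (μ.prod ν)) (hg : Integrable g (μ.prod ν)) :
    ∀ᵐ y ∂ν, ∫ x, (f (x, y) + g (x, y)) / 2 ∂μ =
      ((∫ x, f (x, y) ∂μ) + ∫ x, g (x, y) ∂μ) / 2 := by
  filter_upwards [hf.prod_left_ae, hg.prod_left_ae] with y hfy hgy
  exact integral_midpoint hfy hgy

end Fubini

section Couplings

variable {n : ℕ} {ρxy : (Fin n → ℝ) × (Fin n → ℝ) → ℝ} {ρxzt : (Fin n → ℝ) × (Fin n → ℝ) × ℝ → ℝ}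
  {ρ₀ : (Fin n → ℝ) → ℝ} {Q : (Fin n → ℝ) × ℝ → ℝ}
  {mzt : Measure ((Fin n → ℝ) × (Fin n → ℝ) × ℝ)} {mQ : Measure ((Fin n → ℝ) × ℝ)}
  {πxy πxy' : (Fin n → ℝ) × (Fin n → ℝ) → ℝ} {πxzt πxzt' : (Fin n → ℝ) × (Fin n → ℝ) × ℝ → ℝ}

lemma Feasible.finiteRelEntropy_xy (h : Feasible n ρxy ρxzt ρ₀ Q mzt mQ πxy πxzt) :
    FiniteRelEntropy volume πxy ρxy :=
  ⟨h.1, h.2.2.1, h.2.2.2.2.1, h.2.2.2.2.2.2.2.2.1⟩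

lemma Feasible.finiteRelEntropy_xzt (h : Feasible n ρxy ρxzt ρ₀ Q mzt mQ πxy πxzt) :
    FiniteRelEntropy mzt πxzt ρxzt :=
  ⟨h.2.1, h.2.2.2.1, h.2.2.2.2.2.1, h.2.2.2.2.2.2.2.2.2⟩

lemma Feasible.midpoint (hmzt : mzt = volume.prod mQ)
    (hmQ : mQ = volume.prod (volume.restrict (Icc 0 1)))
    (hρxy : ∀ p, 0 ≤ ρxy p) (hρxzt : ∀ p, 0 ≤ ρxzt p)
    (hρxy_int : Integrable ρxy volume) (hρxzt_int : Integrable ρxzt mzt)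
    (h : Feasible n ρxy ρxzt ρ₀ Q mzt mQ πxy πxzt)
    (h' : Feasible n ρxy ρxzt ρ₀ Q mzt mQ πxy' πxzt') :
    Feasible n ρxy ρxzt ρ₀ Q mzt mQ (fun p => (πxy p + πxy' p) / 2)
      (fun p => (πxzt p + πxzt' p) / 2) := by
  have : SFinite mQ := hmQ ▸ inferInstance
  have hxy := h.finiteRelEntropy_xy.midpoint h'.finiteRelEntropy_xy hρxy hρxy_int
  have hxzt := h.finiteRelEntropy_xzt.midpoint h'.finiteRelEntropy_xzt hρxzt hρxzt_int
  have hixy : Integrable πxy (volume.prod volume) :=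
    h.finiteRelEntropy_xy.integrable hρxy hρxy_int
  have hixy' : Integrable πxy' (volume.prod volume) :=
    h'.finiteRelEntropy_xy.integrable hρxy hρxy_int
  have hixzt : Integrable πxzt (volume.prod mQ) :=
    hmzt ▸ h.finiteRelEntropy_xzt.integrable hρxzt hρxzt_int
  have hixzt' : Integrable πxzt' (volume.prod mQ) :=
    hmzt ▸ h'.finiteRelEntropy_xzt.integrable hρxzt hρxzt_int
  -- the time-space part of the initial constraint is an integral over `mQ`, by Fubini
  have htime : ∀ {F : (Fin n → ℝ) × (Fin n → ℝ) × ℝ → ℝ}, Integrable F (volume.prod mQ) →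
      ∀ᵐ x ∂volume, ∫ t in Icc (0:ℝ) 1, ∫ z, F (x, z, t) = ∫ zt, F (x, zt) ∂mQ := by
    intro F hF
    filter_upwards [hF.prod_right_ae] with x hx
    subst hmQ
    exact (integral_prod_symm _ hx).symm
  obtain ⟨-, -, -, -, -, -, hρ₀, hQ, -, -⟩ := h
  obtain ⟨-, -, -, -, -, -, hρ₀', hQ', -, -⟩ := h'
  refine ⟨hxy.measurable, hxzt.measurable, hxy.nonneg, hxzt.nonneg, hxy.ae_eq_zero_of_eq_zero,
    hxzt.ae_eq_zero_of_eq_zero, ?_, ?_, hxy.integrable_mul_log, hxzt.integrable_mul_log⟩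
  · filter_upwards [hρ₀, hρ₀', ae_integral_midpoint_right hixy hixy',
      ae_integral_midpoint_right hixzt hixzt', htime hixzt, htime hixzt',
      htime (F := fun p => (πxzt p + πxzt' p) / 2) ((hixzt.add hixzt').div_const 2)]
      with x h₀ h₀' hmid_xy hmid_xzt ht ht' ht_mid
    rw [ht_mid, hmid_xy, hmid_xzt, ← ht, ← ht']
    linarith
  · filter_upwards [hQ, hQ', ae_integral_midpoint_left hixzt hixzt'] with zt hzt hzt' hmid
    rw [hmid, hzt, hzt']
    ring

end Couplings

theorem schroedinger_couplings_unique_minimizer_general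
    (n : ℕ)
    (ρxy : (Fin n → ℝ) × (Fin n → ℝ) → ℝ)
    (ρxzt : (Fin n → ℝ) × (Fin n → ℝ) × ℝ → ℝ)
    (ρ₀ : (Fin n → ℝ) → ℝ) (Q : (Fin n → ℝ) × ℝ → ℝ)
    (mzt : Measure ((Fin n → ℝ) × (Fin n → ℝ) × ℝ))
    (hmzt : mzt = (volume : Measure ((Fin n → ℝ) × (Fin n → ℝ) × ℝ)).restrict
      {p | p.2.2 ∈ Set.Icc (0:ℝ) 1})
    (mQ : Measure ((Fin n → ℝ) × ℝ))
    (hmQ : mQ = (volume : Measure ((Fin n → ℝ) × ℝ)).restrict {p | p.2 ∈ Set.Icc (0:ℝ) 1})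
    (hρxy_nonneg : ∀ p, 0 ≤ ρxy p) (hρxzt_nonneg : ∀ p, 0 ≤ ρxzt p)
    (hρxy_int : Integrable ρxy volume) (hρxzt_int : Integrable ρxzt mzt)
    (π1xy : (Fin n → ℝ) × (Fin n → ℝ) → ℝ) (π1xzt : (Fin n → ℝ) × (Fin n → ℝ) × ℝ → ℝ)
    (π2xy : (Fin n → ℝ) × (Fin n → ℝ) → ℝ) (π2xzt : (Fin n → ℝ) × (Fin n → ℝ) × ℝ → ℝ)
    (h1 : Feasible n ρxy ρxzt ρ₀ Q mzt mQ π1xy π1xzt)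
    (h2 : Feasible n ρxy ρxzt ρ₀ Q mzt mQ π2xy π2xzt)
    -- both pairs attain the infimum of the objective over all feasible pairs:
    (h1min : ∀ σxy σxzt, Feasible n ρxy ρxzt ρ₀ Q mzt mQ σxy σxzt →
      dEnt volume π1xy ρxy + dEnt mzt π1xzt ρxzt ≤
        dEnt volume σxy ρxy + dEnt mzt σxzt ρxzt)
    (h2min : ∀ σxy σxzt, Feasible n ρxy ρxzt ρ₀ Q mzt mQ σxy σxzt →
      dEnt volume π2xy ρxy + dEnt mzt π2xzt ρxzt ≤
        dEnt volume σxy ρxy + dEnt mzt σxzt ρxzt) :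
    π1xy =ᵐ[(volume : Measure ((Fin n → ℝ) × (Fin n → ℝ)))] π2xy ∧
      π1xzt =ᵐ[mzt] π2xzt := by
  have hmQ' : mQ = volume.prod (volume.restrict (Icc 0 1)) :=
    hmQ.trans (Measure.prod_restrict_right _).symm
  have hmzt' : mzt = volume.prod mQ := by
    rw [hmQ, Measure.prod_restrict_right]
    exact hmzt
  have hxy₁ := h1.finiteRelEntropy_xy
  have hxy₂ := h2.finiteRelEntropy_xy
  have hxzt₁ := h1.finiteRelEntropy_xzt
  have hxzt₂ := h2.finiteRelEntropy_xzt
  have hequal := le_antisymm (h1min _ _ h2) (h2min _ _ h1)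
  have hmid := h1min _ _ <|
    h1.midpoint hmzt' hmQ' hρxy_nonneg hρxzt_nonneg hρxy_int hρxzt_int h2
  have hjensen_xy := hxy₁.dEnt_midpoint_le hxy₂ hρxy_nonneg hρxy_int
  have hjensen_xzt := hxzt₁.dEnt_midpoint_le hxzt₂ hρxzt_nonneg hρxzt_int
  exact ⟨hxy₁.ae_eq_of_dEnt_midpoint_ge hxy₂ hρxy_nonneg hρxy_int (by linarith),
    hxzt₁.ae_eq_of_dEnt_midpoint_ge hxzt₂ hρxzt_nonneg hρxzt_int (by linarith)⟩

/-- Uniqueness of the minimizer of Problem 2 (Theorem 1(i)): the objective is strictly convex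
and the constraints are linear, so two feasible pairs of couplings both attaining the infimum
of `D(π_xy‖ρ_xy) + D(π_xzt‖ρ_xzt)` coincide almost everywhere. -/
theorem schroedinger_couplings_unique_minimizer
    (n : ℕ) (hn : 1 ≤ n)
    (ρxy : (Fin n → ℝ) × (Fin n → ℝ) → ℝ)
    (ρxzt : (Fin n → ℝ) × (Fin n → ℝ) × ℝ → ℝ)
    (ρ₀ : (Fin n → ℝ) → ℝ) (Q : (Fin n → ℝ) × ℝ → ℝ)
    (mzt : Measure ((Fin n → ℝ) × (Fin n → ℝ) × ℝ))
    (hmzt : mzt = (volume : Measure ((Fin n → ℝ) × (Fin n → ℝ) × ℝ)).restrict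
      {p | p.2.2 ∈ Set.Icc (0:ℝ) 1})
    (mQ : Measure ((Fin n → ℝ) × ℝ))
    (hmQ : mQ = (volume : Measure ((Fin n → ℝ) × ℝ)).restrict {p | p.2 ∈ Set.Icc (0:ℝ) 1})
    (hρxy_nonneg : ∀ p, 0 ≤ ρxy p) (hρxzt_nonneg : ∀ p, 0 ≤ ρxzt p)
    (hρ₀_nonneg : ∀ x, 0 ≤ ρ₀ x) (hQ_nonneg : ∀ p, 0 ≤ Q p)
    (hρxy_int : Integrable ρxy volume) (hρxzt_int : Integrable ρxzt mzt)
    (hρ₀_int : Integrable ρ₀ volume) (hQ_meas : Measurable Q)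
    (π1xy : (Fin n → ℝ) × (Fin n → ℝ) → ℝ) (π1xzt : (Fin n → ℝ) × (Fin n → ℝ) × ℝ → ℝ)
    (π2xy : (Fin n → ℝ) × (Fin n → ℝ) → ℝ) (π2xzt : (Fin n → ℝ) × (Fin n → ℝ) × ℝ → ℝ)
    (h1 : Feasible n ρxy ρxzt ρ₀ Q mzt mQ π1xy π1xzt)
    (h2 : Feasible n ρxy ρxzt ρ₀ Q mzt mQ π2xy π2xzt)
    -- both pairs attain the infimum of the objective over all feasible pairs:
    (h1min : ∀ σxy σxzt, Feasible n ρxy ρxzt ρ₀ Q mzt mQ σxy σxzt →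
      dEnt volume π1xy ρxy + dEnt mzt π1xzt ρxzt ≤
        dEnt volume σxy ρxy + dEnt mzt σxzt ρxzt)
    (h2min : ∀ σxy σxzt, Feasible n ρxy ρxzt ρ₀ Q mzt mQ σxy σxzt →
      dEnt volume π2xy ρxy + dEnt mzt π2xzt ρxzt ≤
        dEnt volume σxy ρxy + dEnt mzt σxzt ρxzt) :
    π1xy =ᵐ[(volume : Measure ((Fin n → ℝ) × (Fin n → ℝ)))] π2xy ∧
      π1xzt =ᵐ[mzt] π2xzt :=
  schroedinger_couplings_unique_minimizer_general n ρxy ρxzt ρ₀ Q mzt hmzt mQ hmQ hρxy_nonneg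
    hρxzt_nonneg hρxy_int hρxzt_int π1xy π1xzt π2xy π2xzt h1 h2 h1min h2min
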